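/- arXiv:2409.15970 — 4 statements merged into one kernel-verified Lean document; each statement's English description precedes it below -/
import Mathlib

section
/- Let n, Δ be positive integers, let M : [n] × [n] → ℤ and v : [n] → ℤ. Define M̂[i,k] = ⌊M[i,k]/Δ⌋, v̂[k] = ⌊v[k]/Δ⌋, u[i] = min over k of (M[i,k] + v[k]), and û[i] = min over k of (M̂[i,k] + v̂[k]). Fix i, and let C_i = {k | M̂[i,k] + v̂[k] ∈ {û[i], û[i]+1}}. Then C_i is nonempty and u[i] = min over k in C_i of (M[i,k] + v[k]). -/
/-- Minimum of an integer-valued function over `Fin n` for `n > 0`. -/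
def imin (n : ℕ) (hn : 0 < n) (f : Fin n → ℤ) : ℤ :=
  Finset.univ.inf' ⟨⟨0, hn⟩, Finset.mem_univ _⟩ f

lemma ediv_add_ediv_le (a b : ℤ) (d : ℤ) (hd : 0 < d) :
    a / d + b / d ≤ (a + b) / d := by
  rw [Int.le_ediv_iff_mul_le hd, add_mul]
  exact add_le_add (Int.ediv_mul_le a hd.ne') (Int.ediv_mul_le b hd.ne')

lemma ediv_le_ediv_add_ediv_add_one (a b : ℤ) (d : ℤ) (hd : 0 < d) :
    (a + b) / d ≤ a / d + b / d + 1 := by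
  have ha := Int.lt_ediv_add_one_mul_self a hd
  have hb := Int.lt_ediv_add_one_mul_self b hd
  have h : a + b < (a / d + b / d + 2) * d := by nlinarith
  have h2 : (a + b) / d < a / d + b / d + 2 := Int.ediv_lt_of_lt_mul hd h
  omega

theorem stmt_2 (n Δ : ℕ) (hn : 0 < n) (hΔ : 0 < Δ)
    (M : Fin n → Fin n → ℤ) (v : Fin n → ℤ) (i : Fin n)
    (Mh : Fin n → Fin n → ℤ) (hMh : ∀ i k, Mh i k = M i k / (Δ : ℤ))
    (vh : Fin n → ℤ) (hvh : ∀ k, vh k = v k / (Δ : ℤ))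
    (u uh : ℤ)
    (hu : u = imin n hn (fun k => M i k + v k))
    (huh : uh = imin n hn (fun k => Mh i k + vh k))
    (C : Finset (Fin n))
    (hC : C = Finset.univ.filter (fun k => Mh i k + vh k = uh ∨ Mh i k + vh k = uh + 1)) :
    ∃ hCne : C.Nonempty, u = C.inf' hCne (fun k => M i k + v k) := by
  have hΔ' : (0 : ℤ) < (Δ : ℤ) := by exact_mod_cast hΔ
  -- argmin of u
  obtain ⟨k₀, -, hk₀⟩ := Finset.exists_mem_eq_inf' (⟨⟨0, hn⟩, Finset.mem_univ _⟩ :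
    Finset.univ.Nonempty) (fun k => M i k + v k)
  -- argmin of uh
  obtain ⟨k₁, -, hk₁⟩ := Finset.exists_mem_eq_inf' (⟨⟨0, hn⟩, Finset.mem_univ _⟩ :
    Finset.univ.Nonempty) (fun k => Mh i k + vh k)
  have hu0 : u = M i k₀ + v k₀ := by rw [hu]; exact hk₀
  have huh1 : uh = Mh i k₁ + vh k₁ := by rw [huh]; exact hk₁
  have hu_le : ∀ k, u ≤ M i k + v k := fun k => by
    rw [hu]; exact Finset.inf'_le _ (Finset.mem_univ k)
  have huh_le : ∀ k, uh ≤ Mh i k + vh k := fun k => by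
    rw [huh]; exact Finset.inf'_le _ (Finset.mem_univ k)
  -- k₀ is a candidate
  have hk₀C : k₀ ∈ C := by
    rw [hC, Finset.mem_filter]
    refine ⟨Finset.mem_univ _, ?_⟩
    have h1 : uh ≤ Mh i k₀ + vh k₀ := huh_le k₀
    have h2 : Mh i k₀ + vh k₀ ≤ uh + 1 := by
      have a1 : Mh i k₀ + vh k₀ ≤ (M i k₀ + v k₀) / (Δ : ℤ) := by
        rw [hMh, hvh]; exact ediv_add_ediv_le _ _ _ hΔ'
      have a2 : (M i k₀ + v k₀) / (Δ : ℤ) ≤ (M i k₁ + v k₁) / (Δ : ℤ) :=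
        Int.ediv_le_ediv hΔ' (by have := hu_le k₁; omega)
      have a3 : (M i k₁ + v k₁) / (Δ : ℤ) ≤ Mh i k₁ + vh k₁ + 1 := by
        rw [hMh, hvh]; exact ediv_le_ediv_add_ediv_add_one _ _ _ hΔ'
      omega
    omega
  refine ⟨⟨k₀, hk₀C⟩, le_antisymm ?_ ?_⟩
  · obtain ⟨k₂, hk₂C, hk₂⟩ := Finset.exists_mem_eq_inf' ⟨k₀, hk₀C⟩
      (fun k => M i k + v k)
    rw [hk₂]; exact hu_le k₂
  · rw [hu0]; exact Finset.inf'_le _ hk₀C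
end

section
/- Let n, Δ be positive integers, M : [n] × [n] → ℤ, v : [n] → ℤ, M̂ = ⌊M/Δ⌋, v̂ = ⌊v/Δ⌋, û[i] = min_k (M̂[i,k] + v̂[k]), and C_i = {k | M̂[i,k] + v̂[k] ∈ {û[i], û[i]+1}}. Fix i, let r ∈ C_i, and let k be a minimizer of M[i,k] + v[k]. Then the offset δ := (M[i,r] + v[r]) − (M[i,k] + v[k]) satisfies 0 ≤ δ ≤ 3Δ − 2. -/
theorem stmt_4 (n Δ : ℕ) (hn : 0 < n) (hΔ : 0 < Δ)
    (M : Fin n → Fin n → ℤ) (v : Fin n → ℤ) (i : Fin n)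
    (Mh : Fin n → Fin n → ℤ) (hMh : ∀ i k, Mh i k = M i k / (Δ : ℤ))
    (vh : Fin n → ℤ) (hvh : ∀ k, vh k = v k / (Δ : ℤ))
    (uh : ℤ) (huh : uh = imin n hn (fun k => Mh i k + vh k))
    (r : Fin n) (hr : Mh i r + vh r = uh ∨ Mh i r + vh r = uh + 1)
    (k : Fin n) (hk : ∀ k' : Fin n, M i k + v k ≤ M i k' + v k')
    (δ : ℤ) (hδ : δ = (M i r + v r) - (M i k + v k)) :
    0 ≤ δ ∧ δ ≤ 3 * (Δ : ℤ) - 2 := by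
  have hD : (0:ℤ) < (Δ:ℤ) := by exact_mod_cast hΔ
  have key : ∀ x : ℤ, (Δ:ℤ) * (x / Δ) ≤ x ∧ x ≤ (Δ:ℤ) * (x / Δ) + (Δ - 1) := by
    intro x
    have h1 : x % Δ < Δ := Int.emod_lt_of_pos x hD
    have h0 : 0 ≤ x % Δ := Int.emod_nonneg x hD.ne'
    have h2 : (Δ:ℤ) * (x / Δ) + x % Δ = x := Int.mul_ediv_add_emod x Δ
    constructor <;> linarith
  have lower : ∀ x : ℤ, (Δ:ℤ) * (x / Δ) ≤ x := fun x => (key x).1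
  have upper : ∀ x : ℤ, x ≤ (Δ:ℤ) * (x / Δ) + (Δ - 1) := fun x => (key x).2
  have hukk : uh ≤ Mh i k + vh k := by
    rw [huh]
    exact Finset.inf'_le _ (Finset.mem_univ k)
  constructor
  · have := hk r; omega
  · have hMr := upper (M i r)
    have hvr := upper (v r)
    have hMk := lower (M i k)
    have hvk := lower (v k)
    have e1 := hMh i r; have e2 := hvh r; have e3 := hMh i k; have e4 := hvh k
    have hrub : Mh i r + vh r ≤ uh + 1 := by rcases hr with h | h <;> omega
    nlinarith [mul_le_mul_of_nonneg_left hrub hD.le, mul_le_mul_of_nonneg_left hukk hD.le]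
end

section
/- Let M : [n] × [n] → {0,1} (Boolean matrix) and v : [n] → {0,1} (Boolean vector). Define M'[i,k] = 2(i+k) − M[i,k] and v'[k] = 2(j−k) − v[k] for a fixed integer j. Then the Boolean product satisfies: (∃ k, M[i,k] = 1 ∧ v[k] = 1) if and only if min over k of (M'[i,k] + v'[k]) = 2(i+j) − 2. -/
theorem stmt_5 (n : ℕ) (hn : 0 < n)
    (M : Fin n → Fin n → ℤ) (hM : ∀ i k, M i k = 0 ∨ M i k = 1)
    (v : Fin n → ℤ) (hv : ∀ k, v k = 0 ∨ v k = 1)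
    (j : ℤ) (i : Fin n)
    (M' : Fin n → Fin n → ℤ)
    (hM' : ∀ i k : Fin n, M' i k = 2 * (((i : ℕ) + 1 : ℤ) + ((k : ℕ) + 1 : ℤ)) - M i k)
    (v' : Fin n → ℤ)
    (hv' : ∀ k : Fin n, v' k = 2 * (j - ((k : ℕ) + 1 : ℤ)) - v k) :
    (∃ k, M i k = 1 ∧ v k = 1) ↔
      imin n hn (fun k => M' i k + v' k) = 2 * (((i : ℕ) + 1 : ℤ) + j) - 2 := by
  have hterm : ∀ k : Fin n, M' i k + v' k
      = 2 * (((i : ℕ) + 1 : ℤ) + j) - (M i k + v k) := by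
    intro k; rw [hM' i k, hv' k]; ring
  constructor
  · rintro ⟨k0, hm, hvk⟩
    apply le_antisymm
    · calc imin n hn (fun k => M' i k + v' k) ≤ M' i k0 + v' k0 :=
            Finset.inf'_le _ (Finset.mem_univ k0)
        _ = 2 * (((i : ℕ) + 1 : ℤ) + j) - 2 := by rw [hterm k0, hm, hvk]; ring
    · apply Finset.le_inf'
      intro k _
      rw [hterm k]
      rcases hM i k with h | h <;> rcases hv k with h' | h' <;> rw [h, h'] <;> omega
  · intro h
    obtain ⟨k0, _, hk0⟩ := Finset.exists_mem_eq_inf' (s := (Finset.univ : Finset (Fin n)))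
      ⟨⟨0, hn⟩, Finset.mem_univ _⟩ (fun k => M' i k + v' k)
    refine ⟨k0, ?_⟩
    rw [imin, hk0, hterm k0] at h
    rcases hM i k0 with hm | hm <;> rcases hv k0 with hvk | hvk <;> rw [hm, hvk] at h <;>
      exact ⟨by omega, by omega⟩
end

section
/- Let M : [n] × [n] → ℤ, v : [n] → ℤ, and for ℓ ∈ ℕ define M^(ℓ)[i,k] = ⌊M[i,k]/2^(ℓ+1)⌋ if the ℓ-th bit of M[i,k] is 0 and M^(ℓ)[i,k] = −1 otherwise; and v^(ℓ)[k] = ⌊(v[k]+1)/2^(ℓ+1)⌋ if the ℓ-th bit of v[k]+1 is 1 and v^(ℓ)[k] = −2 otherwise. Assume all entries of M and v are integers in [0, N). Then for every i: (∃ k, M[i,k] ≤ v[k]) if and only if there exist ℓ ≤ ⌈log₂ N⌉ and k with M^(ℓ)[i,k] = v^(ℓ)[k]. -/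
/-!
`a < c` for `0 ≤ a` holds exactly when, at the highest bit where `a` and `c` differ, `a` has a `0`
and `c` has a `1`. With `c = v[k] + 1`, so that `M[i,k] ≤ v[k] ↔ M[i,k] < c`, the two encodings
are equal exactly at such a bit `ℓ`: the sentinels `-1` and `-2` never match each other nor a
nonnegative quotient. Such a bit of `c ≤ N` satisfies `2 ^ ℓ ≤ N`, whence `ℓ ≤ ⌈log₂ N⌉`.
-/

namespace Int

lemma ediv_two_pow_succ (a : ℤ) (ℓ : ℕ) : a / 2 ^ (ℓ + 1) = a / 2 ^ ℓ / 2 := by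
  rw [pow_succ, Int.ediv_ediv_of_nonneg (by positivity)]

lemma lt_iff_exists_highest_diff_bit {a c : ℤ} (ha : 0 ≤ a) :
    a < c ↔ ∃ ℓ : ℕ, a / 2 ^ ℓ % 2 = 0 ∧ c / 2 ^ ℓ % 2 = 1 ∧
      a / 2 ^ (ℓ + 1) = c / 2 ^ (ℓ + 1) := by
  constructor
  · intro hac
    have hagree : ∃ m : ℕ, a / 2 ^ m = c / 2 ^ m := by
      refine ⟨c.toNat, ?_⟩
      have hc : c < 2 ^ c.toNat := by
        have : (c.toNat : ℤ) < 2 ^ c.toNat := by exact_mod_cast Nat.lt_two_pow_self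
        omega
      rw [Int.ediv_eq_zero_of_lt ha (hac.trans hc), Int.ediv_eq_zero_of_lt (by omega) hc]
    classical
    obtain ⟨ℓ, hℓ⟩ : ∃ ℓ, Nat.find hagree = ℓ + 1 :=
      Nat.exists_eq_succ_of_ne_zero fun h0 => by
        have := Nat.find_spec hagree
        rw [h0] at this
        simp only [pow_zero, Int.ediv_one] at this
        omega
    have hne : a / 2 ^ ℓ ≠ c / 2 ^ ℓ := Nat.find_min hagree (by omega)
    have hle : a / 2 ^ ℓ ≤ c / 2 ^ ℓ := Int.ediv_le_ediv (by positivity) hac.le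
    have heq := Nat.find_spec hagree
    rw [hℓ, ediv_two_pow_succ, ediv_two_pow_succ] at heq
    refine ⟨ℓ, ?_, ?_, by rw [ediv_two_pow_succ, ediv_two_pow_succ, heq]⟩ <;> omega
  · rintro ⟨ℓ, ha0, hc1, heq⟩
    rw [ediv_two_pow_succ, ediv_two_pow_succ] at heq
    by_contra! hca
    have := Int.ediv_le_ediv (c := 2 ^ ℓ) (by positivity) hca
    omega

lemma le_clog_of_ediv_two_pow_emod_eq_one {c : ℤ} {N ℓ : ℕ} (hc : 0 ≤ c) (hcN : c ≤ N)
    (hbit : c / 2 ^ ℓ % 2 = 1) : ℓ ≤ Nat.clog 2 N := by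
  have hq : 1 ≤ c / 2 ^ ℓ := by
    have := Int.ediv_nonneg hc (by positivity : (0 : ℤ) ≤ 2 ^ ℓ)
    omega
  rw [Int.le_ediv_iff_mul_le (by positivity), one_mul] at hq
  have h2N : 2 ^ ℓ ≤ N := by exact_mod_cast hq.trans hcN
  exact (Nat.pow_le_pow_iff_right one_lt_two).mp (h2N.trans (Nat.le_pow_clog one_lt_two N))

lemma encodings_eq_iff {a c : ℤ} (ha : 0 ≤ a) (hc : 0 ≤ c) (ℓ : ℕ) :
    ((if a / 2 ^ ℓ % 2 = 0 then a / 2 ^ (ℓ + 1) else -1) =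
        if c / 2 ^ ℓ % 2 = 1 then c / 2 ^ (ℓ + 1) else -2) ↔
      a / 2 ^ ℓ % 2 = 0 ∧ c / 2 ^ ℓ % 2 = 1 ∧ a / 2 ^ (ℓ + 1) = c / 2 ^ (ℓ + 1) := by
  have ha' := Int.ediv_nonneg ha (by positivity : (0 : ℤ) ≤ 2 ^ (ℓ + 1))
  have hc' := Int.ediv_nonneg hc (by positivity : (0 : ℤ) ≤ 2 ^ (ℓ + 1))
  split_ifs <;> simp_all <;> omega

end Int

theorem stmt_9 (n : ℕ) (N : ℕ)
    (M : Fin n → Fin n → ℤ) (v : Fin n → ℤ)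
    (hM : ∀ i k, 0 ≤ M i k ∧ M i k < (N : ℤ))
    (hv : ∀ k, 0 ≤ v k ∧ v k < (N : ℤ))
    (Mℓ : ℕ → Fin n → Fin n → ℤ)
    (hMℓ : ∀ (ℓ : ℕ) (i k : Fin n),
      Mℓ ℓ i k = if (M i k / 2 ^ ℓ) % 2 = 0 then M i k / 2 ^ (ℓ + 1) else -1)
    (vℓ : ℕ → Fin n → ℤ)
    (hvℓ : ∀ (ℓ : ℕ) (k : Fin n),
      vℓ ℓ k = if ((v k + 1) / 2 ^ ℓ) % 2 = 1 then (v k + 1) / 2 ^ (ℓ + 1) else -2) :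
    ∀ i : Fin n,
      (∃ k, M i k ≤ v k) ↔ ∃ ℓ ≤ Nat.clog 2 N, ∃ k, Mℓ ℓ i k = vℓ ℓ k := by
  intro i
  have hdiff (k : Fin n) : M i k ≤ v k ↔ ∃ ℓ : ℕ, M i k / 2 ^ ℓ % 2 = 0 ∧
      (v k + 1) / 2 ^ ℓ % 2 = 1 ∧ M i k / 2 ^ (ℓ + 1) = (v k + 1) / 2 ^ (ℓ + 1) := by
    rw [← Int.lt_add_one_iff, Int.lt_iff_exists_highest_diff_bit (hM i k).1]
  have henc (ℓ : ℕ) (k : Fin n) : Mℓ ℓ i k = vℓ ℓ k ↔ M i k / 2 ^ ℓ % 2 = 0 ∧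
      (v k + 1) / 2 ^ ℓ % 2 = 1 ∧ M i k / 2 ^ (ℓ + 1) = (v k + 1) / 2 ^ (ℓ + 1) := by
    rw [hMℓ, hvℓ, Int.encodings_eq_iff (hM i k).1 (by linarith [(hv k).1])]
  simp only [hdiff, henc]
  constructor
  · rintro ⟨k, ℓ, hbits⟩
    have hbound := Int.le_clog_of_ediv_two_pow_emod_eq_one (by linarith [(hv k).1])
      (by linarith [(hv k).2]) hbits.2.1
    exact ⟨ℓ, hbound, k, hbits⟩
  · rintro ⟨ℓ, -, k, hbits⟩
    exact ⟨k, ℓ, hbits⟩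
end
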